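/- arXiv:1906.11101 — 4 statements merged into one kernel-verified Lean document; each statement's English description precedes it below -/
import Mathlib

section
/- For every ε > 0, ξ ∈ ℝ and t ∈ ℝ, the matrix exponential of the free Dirac symbol decomposes as exp((it/ε²)·Q_ε(ξ)) = e^{it/ε²}·e^{it·d_ε(ξ)}·Π₊^ε(ξ) + e^{−it/ε²}·e^{−it·d_ε(ξ)}·Π₋^ε(ξ). -/
open Matrix

noncomputable section

/-- The Pauli matrix σ₁. -/
def pauli1 : Matrix (Fin 2) (Fin 2) ℂ := !![0, 1; 1, 0]

/-- The Pauli matrix σ₃. -/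
def pauli3 : Matrix (Fin 2) (Fin 2) ℂ := !![1, 0; 0, -1]

/-- The free Dirac symbol Q_ε(ξ) = εξσ₁ + σ₃. -/
def diracSymbol (ε ξ : ℝ) : Matrix (Fin 2) (Fin 2) ℂ :=
  ((ε * ξ : ℝ) : ℂ) • pauli1 + pauli3

/-- The projection symbol Π₊^ε(ξ) = (1/2)(I₂ + (1+ε²ξ²)^{-1/2} Q_ε(ξ)). -/
def projPlus (ε ξ : ℝ) : Matrix (Fin 2) (Fin 2) ℂ :=
  (1 / 2 : ℂ) • ((1 : Matrix (Fin 2) (Fin 2) ℂ)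
    + (((Real.sqrt (1 + ε ^ 2 * ξ ^ 2))⁻¹ : ℝ) : ℂ) • diracSymbol ε ξ)

/-- The projection symbol Π₋^ε(ξ) = (1/2)(I₂ − (1+ε²ξ²)^{-1/2} Q_ε(ξ)). -/
def projMinus (ε ξ : ℝ) : Matrix (Fin 2) (Fin 2) ℂ :=
  (1 / 2 : ℂ) • ((1 : Matrix (Fin 2) (Fin 2) ℂ)
    - (((Real.sqrt (1 + ε ^ 2 * ξ ^ 2))⁻¹ : ℝ) : ℂ) • diracSymbol ε ξ)


/-- The rescaled dispersion symbol d_ε(ξ) = (√(1+ε²ξ²) − 1)/ε². -/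
def dispSymbol (ε ξ : ℝ) : ℝ := (Real.sqrt (1 + ε ^ 2 * ξ ^ 2) - 1) / ε ^ 2

/-!
Since σ₁ and σ₃ square to 1 and anticommute, `Q_ε(ξ)² = 1 + ε²ξ²`, so the sign
`u = Q_ε(ξ) / √(1 + ε²ξ²)` is an involution and `Π±^ε(ξ) = (1 ± u) / 2` are complementary
idempotents. For an involution, `exp (b • u) = e^b Π₊ + e^{-b} Π₋`; here
`b = it√(1 + ε²ξ²)/ε² = it/ε² + it d_ε(ξ)`.
-/

namespace NormedSpace

variable {𝕂 𝔸 : Type*} [RCLike 𝕂] [NormedRing 𝔸] [NormedAlgebra 𝕂 𝔸] [CompleteSpace 𝔸]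

theorem exp_smul_of_isIdempotentElem {p : 𝔸} (hp : IsIdempotentElem p) (a : 𝕂) :
    exp (a • p) = 1 + (exp a - 1) • p := by
  have hterm (n : ℕ) : (n.factorial⁻¹ : 𝕂) • (a • p) ^ n
      = ((n.factorial⁻¹ : 𝕂) • a ^ n) • p + if n = 0 then 1 - p else 0 := by
    rcases n with _ | n
    · simp
    · simp [smul_pow, hp.pow_succ_eq, smul_smul]
  have hsum : HasSum (fun n : ℕ => (n.factorial⁻¹ : 𝕂) • (a • p) ^ n) (exp a • p + (1 - p)) := by
    simp only [hterm]
    exact ((exp_series_hasSum_exp' a).smul_const p).add (hasSum_ite_eq 0 (1 - p))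
  rw [(exp_series_hasSum_exp' (a • p)).unique hsum]
  module

theorem exp_smul_of_mul_self_eq_one {u : 𝔸} (hu : u * u = 1) (b : 𝕂) :
    exp (b • u) = exp b • ((1 / 2 : 𝕂) • (1 + u)) + exp (-b) • ((1 / 2 : 𝕂) • (1 - u)) := by
  -- `exp_add_of_commute` is stated for normed `ℚ`-algebras
  let := NormedAlgebra.restrictScalars ℚ 𝕂 𝔸
  set p : 𝔸 := (1 / 2 : 𝕂) • (1 + u)
  have hp : IsIdempotentElem p := by
    simp only [IsIdempotentElem, p, smul_mul_smul, add_mul, mul_add, one_mul, mul_one, hu]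
    module
  have hsplit : b • u = (2 * b) • p + algebraMap 𝕂 𝔸 (-b) := by
    rw [Algebra.algebraMap_eq_smul_one]; module
  have hscalar : exp (-b) * exp (2 * b) = exp b := by
    rw [← exp_add]; ring_nf
  rw [hsplit, exp_add_of_commute (Algebra.commutes _ _).symm, exp_smul_of_isIdempotentElem hp,
    ← algebraMap_exp_comm, Algebra.algebraMap_eq_smul_one, mul_smul_comm, mul_one, smul_add,
    smul_smul, mul_sub, mul_one, hscalar]
  simp only [p]
  module

end NormedSpace

open scoped Matrix.Norms.Operator in
theorem Matrix.exp_smul_of_mul_self_eq_one {n 𝕂 : Type*} [Fintype n] [DecidableEq n] [RCLike 𝕂]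
    {u : Matrix n n 𝕂} (hu : u * u = 1) (b : 𝕂) :
    NormedSpace.exp (b • u)
      = NormedSpace.exp b • ((1 / 2 : 𝕂) • (1 + u))
        + NormedSpace.exp (-b) • ((1 / 2 : 𝕂) • (1 - u)) :=
  NormedSpace.exp_smul_of_mul_self_eq_one hu b

theorem pauli1_mul_self : pauli1 * pauli1 = 1 := by
  simp [pauli1, ← Matrix.ext_iff, Fin.forall_fin_two]

theorem pauli3_mul_self : pauli3 * pauli3 = 1 := by
  simp [pauli3, ← Matrix.ext_iff, Fin.forall_fin_two]

theorem pauli3_mul_pauli1 : pauli3 * pauli1 = -(pauli1 * pauli3) := by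
  simp [pauli1, pauli3]

theorem diracSymbol_mul_self (ε ξ : ℝ) :
    diracSymbol ε ξ * diracSymbol ε ξ = ((1 + ε ^ 2 * ξ ^ 2 : ℝ) : ℂ) • 1 := by
  simp only [diracSymbol, add_mul, mul_add, smul_mul_assoc, mul_smul_comm, pauli1_mul_self,
    pauli3_mul_self, pauli3_mul_pauli1]
  push_cast
  module

/-- `projPlus ε ξ` and `projMinus ε ξ` are `(1 ± diracSign ε ξ) / 2` by definition. -/
def diracSign (ε ξ : ℝ) : Matrix (Fin 2) (Fin 2) ℂ :=
  (((Real.sqrt (1 + ε ^ 2 * ξ ^ 2))⁻¹ : ℝ) : ℂ) • diracSymbol ε ξ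

theorem diracSign_mul_self (ε ξ : ℝ) : diracSign ε ξ * diracSign ε ξ = 1 := by
  have hpos : 0 < 1 + ε ^ 2 * ξ ^ 2 := by positivity
  rw [diracSign, smul_mul_smul, diracSymbol_mul_self, smul_smul, ← Complex.ofReal_mul,
    ← Complex.ofReal_mul, ← mul_inv, Real.mul_self_sqrt hpos.le, inv_mul_cancel₀ hpos.ne',
    Complex.ofReal_one, one_smul]

theorem diracSymbol_eq_smul_diracSign (ε ξ : ℝ) :
    diracSymbol ε ξ = ((√(1 + ε ^ 2 * ξ ^ 2) : ℝ) : ℂ) • diracSign ε ξ := by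
  have hsqrt : √(1 + ε ^ 2 * ξ ^ 2) ≠ 0 := (Real.sqrt_pos.2 (by positivity)).ne'
  rw [diracSign, smul_smul, ← Complex.ofReal_mul, mul_inv_cancel₀ hsqrt, Complex.ofReal_one,
    one_smul]

theorem exp_diracSymbol_decomposition_general (ε ξ t : ℝ) :
    NormedSpace.exp ((Complex.I * (t : ℂ) / ((ε : ℂ)) ^ 2) • diracSymbol ε ξ)
      = (Complex.exp (Complex.I * (t : ℂ) / ((ε : ℂ)) ^ 2)
          * Complex.exp (Complex.I * (t : ℂ) * ((dispSymbol ε ξ : ℝ) : ℂ))) • projPlus ε ξ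
        + (Complex.exp (-(Complex.I * (t : ℂ) / ((ε : ℂ)) ^ 2))
          * Complex.exp (-(Complex.I * (t : ℂ) * ((dispSymbol ε ξ : ℝ) : ℂ)))) • projMinus ε ξ := by
  have hphase : Complex.I * t / (ε : ℂ) ^ 2 + Complex.I * t * (dispSymbol ε ξ : ℂ)
      = Complex.I * t / (ε : ℂ) ^ 2 * (√(1 + ε ^ 2 * ξ ^ 2) : ℝ) := by
    rw [dispSymbol]; push_cast; ring
  rw [diracSymbol_eq_smul_diracSign, smul_smul,
    Matrix.exp_smul_of_mul_self_eq_one (diracSign_mul_self ε ξ), ← Complex.exp_add,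
    ← Complex.exp_add, ← neg_add, hphase, Complex.exp_eq_exp_ℂ]
  rfl

/-- decomposition of the matrix exponential of the free Dirac symbol,
exp((it/ε²)Q_ε(ξ)) = e^{it/ε²} e^{it d_ε(ξ)} Π₊^ε(ξ) + e^{−it/ε²} e^{−it d_ε(ξ)} Π₋^ε(ξ). -/
theorem exp_diracSymbol_decomposition (ε ξ t : ℝ) (hε : 0 < ε) :
    NormedSpace.exp ((Complex.I * (t : ℂ) / ((ε : ℂ)) ^ 2) • diracSymbol ε ξ)
      = (Complex.exp (Complex.I * (t : ℂ) / ((ε : ℂ)) ^ 2)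
          * Complex.exp (Complex.I * (t : ℂ) * ((dispSymbol ε ξ : ℝ) : ℂ))) • projPlus ε ξ
        + (Complex.exp (-(Complex.I * (t : ℂ) / ((ε : ℂ)) ^ 2))
          * Complex.exp (-(Complex.I * (t : ℂ) * ((dispSymbol ε ξ : ℝ) : ℂ)))) • projMinus ε ξ :=
  exp_diracSymbol_decomposition_general ε ξ t
end
end

section
/- For every ε > 0 and every ξ ∈ ℝ, the projection symbols are ε|ξ|-close to the constant diagonal projections: ‖Π₊^ε(ξ) − Π₊⁰‖ ≤ ε|ξ| and ‖Π₋^ε(ξ) − Π₋⁰‖ ≤ ε|ξ|, where ‖·‖ is the operator norm on M₂(ℂ), Π₊⁰ = diag(1,0) and Π₋⁰ = diag(0,1). -/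
open Matrix
open scoped Matrix.Norms.L2Operator

noncomputable section

/-- The limiting diagonal projection Π₊⁰ = diag(1,0). -/
def projPlus0 : Matrix (Fin 2) (Fin 2) ℂ := !![1, 0; 0, 0]

/-- The limiting diagonal projection Π₋⁰ = diag(0,1). -/
def projMinus0 : Matrix (Fin 2) (Fin 2) ℂ := !![0, 0; 0, 1]

/-!
With `c = (1 + ε²ξ²)^{-1/2}`, one has `Π₊^ε(ξ) − Π₊⁰ = ½ (c εξ σ₁ + (c − 1) σ₃)`. The Pauli
matrices are self-adjoint involutions, hence unitary of norm one, so the triangle inequality gives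
the bound `½ (c ε|ξ| + (1 − c))`, and `c ≤ 1`, `1 − c ≤ √(1 + ε²ξ²) − 1 ≤ ε|ξ|`. Since
`Π₊^ε + Π₋^ε = 1 = Π₊⁰ + Π₋⁰`, the difference for `Π₋` is the negative of the one for `Π₊`.
-/

lemma IsSelfAdjoint.mem_unitary_of_mul_self_eq_one {R : Type*} [Monoid R] [StarMul R] {u : R}
    (hu : IsSelfAdjoint u) (hsq : u * u = 1) : u ∈ unitary R :=
  Unitary.mem_iff.mpr (by rw [hu.star_eq]; exact ⟨hsq, hsq⟩)

lemma norm_pauli1 : ‖pauli1‖ = 1 := by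
  refine CStarRing.norm_of_mem_unitary (IsSelfAdjoint.mem_unitary_of_mul_self_eq_one ?_ ?_)
  · ext i j; fin_cases i <;> fin_cases j <;> simp [pauli1]
  · ext i j; fin_cases i <;> fin_cases j <;> simp [pauli1, Matrix.mul_apply]

lemma norm_pauli3 : ‖pauli3‖ = 1 := by
  refine CStarRing.norm_of_mem_unitary (IsSelfAdjoint.mem_unitary_of_mul_self_eq_one ?_ ?_)
  · ext i j; fin_cases i <;> fin_cases j <;> simp [pauli3]
  · ext i j; fin_cases i <;> fin_cases j <;> simp [pauli3, Matrix.mul_apply]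

lemma norm_smul_pauli1_add_smul_pauli3_le (x y : ℝ) :
    ‖(x : ℂ) • pauli1 + (y : ℂ) • pauli3‖ ≤ |x| + |y| :=
  calc ‖(x : ℂ) • pauli1 + (y : ℂ) • pauli3‖
      ≤ ‖(x : ℂ) • pauli1‖ + ‖(y : ℂ) • pauli3‖ := norm_add_le _ _
    _ = |x| + |y| := by simp only [norm_smul, norm_pauli1, norm_pauli3, Complex.norm_real,
        Real.norm_eq_abs, mul_one]

lemma projPlus_add_projMinus (ε ξ : ℝ) : projPlus ε ξ + projMinus ε ξ = 1 := by
  rw [projPlus, projMinus, ← smul_add, add_add_sub_cancel, ← two_smul ℂ, smul_smul]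
  norm_num

lemma projPlus0_add_projMinus0 : projPlus0 + projMinus0 = 1 := by
  ext i j; fin_cases i <;> fin_cases j <;> simp [projPlus0, projMinus0]

lemma projMinus_sub_projMinus0 (ε ξ : ℝ) :
    projMinus ε ξ - projMinus0 = -(projPlus ε ξ - projPlus0) := by
  rw [eq_sub_of_add_eq' (projPlus_add_projMinus ε ξ), eq_sub_of_add_eq' projPlus0_add_projMinus0]
  abel

lemma projPlus_sub_projPlus0 (ε ξ : ℝ) :
    let c := (Real.sqrt (1 + (ε * ξ) ^ 2))⁻¹
    projPlus ε ξ - projPlus0 =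
      ((c * (ε * ξ) / 2 : ℝ) : ℂ) • pauli1 + (((c - 1) / 2 : ℝ) : ℂ) • pauli3 := by
  intro c
  ext i j
  fin_cases i <;> fin_cases j <;>
    simp [projPlus, projPlus0, diracSymbol, pauli1, pauli3, c, mul_pow] <;> ring

lemma inv_sqrt_one_add_sq_le_one (a : ℝ) : (Real.sqrt (1 + a ^ 2))⁻¹ ≤ 1 :=
  inv_le_one_of_one_le₀ (Real.one_le_sqrt.2 (le_add_of_nonneg_right (sq_nonneg a)))

lemma one_sub_inv_sqrt_one_add_sq_le_abs (a : ℝ) : 1 - (Real.sqrt (1 + a ^ 2))⁻¹ ≤ |a| := by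
  set t := Real.sqrt (1 + a ^ 2)
  have ht1 : 1 ≤ t := Real.one_le_sqrt.2 (le_add_of_nonneg_right (sq_nonneg a))
  have ht : t ≤ 1 + |a| := Real.sqrt_le_iff.2 ⟨by positivity, by nlinarith [sq_abs a, abs_nonneg a]⟩
  calc 1 - t⁻¹ = (t - 1) * t⁻¹ := by field_simp
    _ ≤ t - 1 := mul_le_of_le_one_right (sub_nonneg.2 ht1) (inv_le_one_of_one_le₀ ht1)
    _ ≤ |a| := by linarith

lemma norm_projPlus_sub_projPlus0_le (ε ξ : ℝ) : ‖projPlus ε ξ - projPlus0‖ ≤ |ε * ξ| := by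
  set a := ε * ξ
  set c := (Real.sqrt (1 + a ^ 2))⁻¹
  have hc0 : 0 ≤ c := by positivity
  have hc1 : c ≤ 1 := inv_sqrt_one_add_sq_le_one a
  calc ‖projPlus ε ξ - projPlus0‖ ≤ |c * a / 2| + |(c - 1) / 2| := by
        rw [projPlus_sub_projPlus0]; exact norm_smul_pauli1_add_smul_pauli3_le _ _
    _ = (c * |a| + (1 - c)) / 2 := by
        rw [abs_div, abs_div, abs_mul, abs_of_nonneg hc0, abs_of_nonpos (sub_nonpos.2 hc1)]
        norm_num
        ring
    _ ≤ |a| := by nlinarith [abs_nonneg a, one_sub_inv_sqrt_one_add_sq_le_abs a]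

/-- in the l² operator norm on M₂(ℂ), the projection symbols are
ε|ξ|-close to the limiting diagonal projections: ‖Π₊^ε(ξ) − Π₊⁰‖ ≤ ε|ξ| and
‖Π₋^ε(ξ) − Π₋⁰‖ ≤ ε|ξ|. -/
theorem proj_symbols_close_to_diagonal (ε ξ : ℝ) (hε : 0 < ε) :
    ‖projPlus ε ξ - projPlus0‖ ≤ ε * |ξ| ∧
    ‖projMinus ε ξ - projMinus0‖ ≤ ε * |ξ| := by
  have hplus : ‖projPlus ε ξ - projPlus0‖ ≤ ε * |ξ| := by
    simpa only [abs_mul, abs_of_pos hε] using norm_projPlus_sub_projPlus0_le ε ξ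
  refine ⟨hplus, ?_⟩
  rwa [projMinus_sub_projMinus0, norm_neg]
end
end

section
/- Exact solvability of the nonlinear substep of the splitting scheme: for all λ₁, λ₂ ∈ ℝ, V ∈ ℝ and Φ₀ ∈ ℂ², the function Φ(t) = exp(−it(V·I₂ + F(Φ₀)))·Φ₀ satisfies F(Φ(t)) = F(Φ₀) and |Φ(t)| = |Φ₀| for all t ∈ ℝ, and it solves the ODE i·Φ'(t) = (V·I₂ + F(Φ(t)))·Φ(t) with Φ(0) = Φ₀. -/
open Matrix

noncomputable section

/-- The cubic nonlinearity F(Φ) = λ₁(Φ*σ₃Φ)σ₃ + λ₂|Φ|²I₂, written with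
Φ*MΨ = star Φ ⬝ᵥ M.mulVec Ψ. -/
def Fnl (l1 l2 : ℝ) (Φ : Fin 2 → ℂ) : Matrix (Fin 2) (Fin 2) ℂ :=
  ((l1 : ℂ) * (star Φ ⬝ᵥ pauli3.mulVec Φ)) • pauli3
    + ((l2 : ℂ) * (star Φ ⬝ᵥ Φ)) • (1 : Matrix (Fin 2) (Fin 2) ℂ)

/-- g₁(Φ₊,Φ₋) = λ₁(Φ₋*σ₃Φ₊)σ₃ + λ₂(Φ₋*Φ₊)I₂. -/
def gOsc (l1 l2 : ℝ) (Φp Φm : Fin 2 → ℂ) : Matrix (Fin 2) (Fin 2) ℂ :=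
  ((l1 : ℂ) * (star Φm ⬝ᵥ pauli3.mulVec Φp)) • pauli3
    + ((l2 : ℂ) * (star Φm ⬝ᵥ Φp)) • (1 : Matrix (Fin 2) (Fin 2) ℂ)

/-- g₂(Φ₊,Φ₋) = λ₁(Φ₊*σ₃Φ₊ + Φ₋*σ₃Φ₋)σ₃ + λ₂(|Φ₊|² + |Φ₋|²)I₂. -/
def gNonOsc (l1 l2 : ℝ) (Φp Φm : Fin 2 → ℂ) : Matrix (Fin 2) (Fin 2) ℂ :=
  ((l1 : ℂ) * (star Φp ⬝ᵥ pauli3.mulVec Φp + star Φm ⬝ᵥ pauli3.mulVec Φm)) • pauli3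
    + ((l2 : ℂ) * (star Φp ⬝ᵥ Φp + star Φm ⬝ᵥ Φm)) • (1 : Matrix (Fin 2) (Fin 2) ℂ)

/-- The Euclidean norm on ℂ². -/
def eucNorm (Φ : Fin 2 → ℂ) : ℝ := Real.sqrt (‖Φ 0‖ ^ 2 + ‖Φ 1‖ ^ 2)

/-- The exact flow of the nonlinear substep, Φ(t) = exp(−it(V·I₂ + F(Φ₀)))Φ₀. -/
def substepFlow (l1 l2 V : ℝ) (Φ₀ : Fin 2 → ℂ) (t : ℝ) : Fin 2 → ℂ :=
  (NormedSpace.exp ((-(Complex.I * (t : ℂ))) •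
      ((V : ℂ) • (1 : Matrix (Fin 2) (Fin 2) ℂ) + Fnl l1 l2 Φ₀))).mulVec Φ₀

/-!
The matrices σ₃ and I₂ are diagonal and the coefficients Φ*σ₃Φ, |Φ|² are real, so
V·I₂ + F(Φ₀) is a real diagonal matrix and exp(−it(V·I₂ + F(Φ₀))) multiplies each component of
Φ₀ by a unimodular phase. The moduli |Φ(t)ⱼ| are therefore constant in t; since F(Φ) and |Φ|
depend on Φ only through these moduli, both are conserved. Along the flow the nonlinear equation
thus coincides with the linear equation iΦ' = (V·I₂ + F(Φ₀))Φ, which the exponential solves.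
-/

lemma star_dotProduct_self_eq_sum_sq_norm {ι : Type*} [Fintype ι] (Φ : ι → ℂ) :
    star Φ ⬝ᵥ Φ = ∑ j, (‖Φ j‖ : ℂ) ^ 2 := by
  simp only [dotProduct, Pi.star_apply, Complex.star_def, Complex.conj_mul']

lemma star_dotProduct_pauli3_mulVec (Φ : Fin 2 → ℂ) :
    star Φ ⬝ᵥ pauli3 *ᵥ Φ = (‖Φ 0‖ : ℂ) ^ 2 - (‖Φ 1‖ : ℂ) ^ 2 := by
  simp [pauli3, mulVec, dotProduct, Fin.sum_univ_two, Complex.conj_mul', sub_eq_add_neg]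

lemma Fnl_eq_of_norm_eq (l1 l2 : ℝ) {Φ Ψ : Fin 2 → ℂ} (h : ∀ j, ‖Φ j‖ = ‖Ψ j‖) :
    Fnl l1 l2 Φ = Fnl l1 l2 Ψ := by
  simp only [Fnl, star_dotProduct_pauli3_mulVec, star_dotProduct_self_eq_sum_sq_norm, h]

lemma exists_smul_one_add_Fnl_eq_diagonal (l1 l2 V : ℝ) (Φ : Fin 2 → ℂ) :
    ∃ r : Fin 2 → ℝ,
      (V : ℂ) • (1 : Matrix (Fin 2) (Fin 2) ℂ) + Fnl l1 l2 Φ = diagonal (fun j => (r j : ℂ)) := by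
  refine ⟨![V + l1 * (‖Φ 0‖ ^ 2 - ‖Φ 1‖ ^ 2) + l2 * (‖Φ 0‖ ^ 2 + ‖Φ 1‖ ^ 2),
    V - l1 * (‖Φ 0‖ ^ 2 - ‖Φ 1‖ ^ 2) + l2 * (‖Φ 0‖ ^ 2 + ‖Φ 1‖ ^ 2)], ?_⟩
  rw [Fnl, star_dotProduct_pauli3_mulVec, star_dotProduct_self_eq_sum_sq_norm]
  ext i j
  fin_cases i <;> fin_cases j <;> simp [pauli3, Fin.sum_univ_two] <;> ring

lemma norm_exp_smul_diagonal_mulVec_apply {ι : Type*} [Fintype ι] [DecidableEq ι] (r : ι → ℝ)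
    (t : ℝ) (v : ι → ℂ) (j : ι) :
    ‖(NormedSpace.exp ((-(Complex.I * t)) • diagonal (fun j => (r j : ℂ))) *ᵥ v) j‖ = ‖v j‖ := by
  rw [← diagonal_smul, exp_diagonal, mulVec_diagonal, Pi.coe_exp, Pi.smul_apply, smul_eq_mul,
    ← Complex.exp_eq_exp_ℂ, norm_mul, Complex.norm_exp]
  simp

section
-- `NormedSpace.exp` on matrices is norm-independent; some norm is needed only to differentiate it.
attribute [local instance] Matrix.linftyOpNormedRing Matrix.linftyOpNormedAlgebra

lemma hasDerivAt_exp_neg_I_mul_smul_mulVec {n : Type*} [Fintype n] [DecidableEq n]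
    (A : Matrix n n ℂ) (v : n → ℂ) (t : ℝ) :
    HasDerivAt (fun s : ℝ => NormedSpace.exp ((-(Complex.I * s)) • A) *ᵥ v)
      (-Complex.I • (A *ᵥ (NormedSpace.exp ((-(Complex.I * t)) • A) *ᵥ v))) t := by
  let L : Matrix n n ℂ →L[ℝ] (n → ℂ) := LinearMap.toContinuousLinearMap
    { toFun := fun M => M *ᵥ v
      map_add' := fun M N => add_mulVec M N v
      map_smul' := fun c M => smul_mulVec c M v }
  have h := L.hasFDerivAt.comp_hasDerivAt t
    (hasDerivAt_exp_smul_const' (𝕂 := ℝ) (-Complex.I • A) t)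
  have hsmul (s : ℝ) : s • (-Complex.I • A) = (-(Complex.I * s)) • A := by
    rw [← smul_assoc, Complex.real_smul, mul_neg, mul_comm]
  simp only [Function.comp_def, hsmul] at h
  refine h.congr_deriv ?_
  rw [← smul_mulVec, mulVec_mulVec]
  rfl

end

/-- the nonlinear substep is exactly solvable: along
Φ(t) = exp(−it(V·I₂ + F(Φ₀)))Φ₀ one has Φ(0) = Φ₀, F(Φ(t)) = F(Φ₀) and
|Φ(t)| = |Φ₀| for all t, and Φ solves i·Φ'(t) = (V·I₂ + F(Φ(t)))·Φ(t). -/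
theorem substepFlow_exactly_solvable (l1 l2 V : ℝ) (Φ₀ : Fin 2 → ℂ) :
    substepFlow l1 l2 V Φ₀ 0 = Φ₀ ∧
    ∀ t : ℝ,
      Fnl l1 l2 (substepFlow l1 l2 V Φ₀ t) = Fnl l1 l2 Φ₀ ∧
      eucNorm (substepFlow l1 l2 V Φ₀ t) = eucNorm Φ₀ ∧
      ∃ D : Fin 2 → ℂ,
        HasDerivAt (substepFlow l1 l2 V Φ₀) D t ∧
        Complex.I • D
          = ((V : ℂ) • (1 : Matrix (Fin 2) (Fin 2) ℂ)
              + Fnl l1 l2 (substepFlow l1 l2 V Φ₀ t)).mulVec (substepFlow l1 l2 V Φ₀ t) := by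
  obtain ⟨r, hr⟩ := exists_smul_one_add_Fnl_eq_diagonal l1 l2 V Φ₀
  have hnorm (t : ℝ) (j : Fin 2) : ‖substepFlow l1 l2 V Φ₀ t j‖ = ‖Φ₀ j‖ := by
    rw [substepFlow, hr]
    exact norm_exp_smul_diagonal_mulVec_apply r t Φ₀ j
  have hF (t : ℝ) : Fnl l1 l2 (substepFlow l1 l2 V Φ₀ t) = Fnl l1 l2 Φ₀ :=
    Fnl_eq_of_norm_eq l1 l2 (hnorm t)
  refine ⟨by simp [substepFlow], fun t => ⟨hF t, by simp only [eucNorm, hnorm t], _,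
    hasDerivAt_exp_neg_I_mul_smul_mulVec _ Φ₀ t, ?_⟩⟩
  rw [hF t, smul_smul, mul_neg, Complex.I_mul_I, neg_neg, one_smul, substepFlow]
end
end

section
/- Two-dimensional midpoint quadrature estimate over a triangle: let E be a real normed space, τ > 0, and g : ℝ × ℝ → E be continuously differentiable on [0, τ]² with ‖g(s,w)‖ ≤ M₀ and ‖∂_s g(s,w)‖ ≤ M₁, ‖∂_w g(s,w)‖ ≤ M₁ for all (s,w) ∈ [0, τ]². Then ‖∫₀^τ ∫₀^s g(s,w) dw ds − (τ²/2)·g(τ/2, τ/2)‖ ≤ min((3/2)τ²M₀, τ³M₁). -/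
open Set intervalIntegral

/-! Subtracting the midpoint value turns the error into the double integral of
`g s w - g (τ/2) (τ/2)` over the triangle `0 ≤ w ≤ s ≤ τ`, whose area is `τ² / 2`. That integrand
is bounded by `2 M₀` directly, and by `τ M₁` through the mean value theorem applied in each
variable in turn. -/

section

variable {E : Type*} [NormedAddCommGroup E] [NormedSpace ℝ E]

theorem norm_sub_le_of_norm_partialDeriv_le {S W : Set ℝ} (hS : Convex ℝ S) (hW : Convex ℝ W)
    {g gs gw : ℝ → ℝ → E} {M : ℝ}
    (hds : ∀ s ∈ S, ∀ w ∈ W, HasDerivWithinAt (fun s' => g s' w) (gs s w) S s)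
    (hdw : ∀ s ∈ S, ∀ w ∈ W, HasDerivWithinAt (g s) (gw s w) W w)
    (hgs : ∀ s ∈ S, ∀ w ∈ W, ‖gs s w‖ ≤ M) (hgw : ∀ s ∈ S, ∀ w ∈ W, ‖gw s w‖ ≤ M)
    {s s₀ w w₀ : ℝ} (hs : s ∈ S) (hs₀ : s₀ ∈ S) (hw : w ∈ W) (hw₀ : w₀ ∈ W) :
    ‖g s w - g s₀ w₀‖ ≤ M * (|s - s₀| + |w - w₀|) := by
  have h₁ : ‖g s w - g s₀ w‖ ≤ M * ‖s - s₀‖ :=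
    hS.norm_image_sub_le_of_norm_hasDerivWithin_le (f := fun s' => g s' w)
      (fun x hx => hds x hx w hw) (fun x hx => hgs x hx w hw) hs₀ hs
  have h₂ : ‖g s₀ w - g s₀ w₀‖ ≤ M * ‖w - w₀‖ :=
    hW.norm_image_sub_le_of_norm_hasDerivWithin_le (hdw s₀ hs₀) (hgw s₀ hs₀) hw₀ hw
  calc ‖g s w - g s₀ w₀‖ ≤ ‖g s w - g s₀ w‖ + ‖g s₀ w - g s₀ w₀‖ :=
        norm_sub_le_norm_sub_add_norm_sub _ _ _
    _ ≤ M * (|s - s₀| + |w - w₀|) := by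
      rw [mul_add]; exact add_le_add h₁ h₂

theorem norm_integral_integral_le_of_norm_le {f : ℝ → ℝ → E} {τ B : ℝ} (hτ : 0 ≤ τ)
    (hf : ∀ s ∈ Icc 0 τ, ∀ w ∈ Icc 0 s, ‖f s w‖ ≤ B) :
    ‖∫ s in (0 : ℝ)..τ, ∫ w in (0 : ℝ)..s, f s w‖ ≤ B * (τ ^ 2 / 2) := by
  have hinner : ∀ s ∈ Ioc 0 τ, ‖∫ w in (0 : ℝ)..s, f s w‖ ≤ B * s := fun s hs => by
    have := norm_integral_le_of_norm_le_const fun w hw => hf s (Ioc_subset_Icc_self hs) w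
      (by rw [uIoc_of_le hs.1.le] at hw; exact Ioc_subset_Icc_self hw)
    rwa [sub_zero, abs_of_pos hs.1] at this
  calc ‖∫ s in (0 : ℝ)..τ, ∫ w in (0 : ℝ)..s, f s w‖ ≤ ∫ s in (0 : ℝ)..τ, B * s :=
        norm_integral_le_of_norm_le hτ (.of_forall hinner)
          ((continuous_const_mul B).intervalIntegrable _ _)
    _ = B * (τ ^ 2 / 2) := by
      rw [intervalIntegral.integral_const_mul, integral_id]; ring

theorem continuousOn_integral_of_continuousOn_Icc_prod {f : ℝ → ℝ → E} {a b : ℝ} (hab : a ≤ b)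
    (hf : ContinuousOn (Function.uncurry f) (Icc a b ×ˢ Icc a b)) :
    ContinuousOn (fun s => ∫ w in a..s, f s w) (Icc a b) := by
  set π : ℝ → ℝ := fun x => projIcc a b hab x
  have hπ : Continuous π := continuous_subtype_val.comp continuous_projIcc
  have hext : Continuous (Function.uncurry fun s w => f (π s) (π w)) :=
    hf.comp_continuous ((hπ.comp continuous_fst).prodMk (hπ.comp continuous_snd))
      fun p => ⟨Subtype.prop _, Subtype.prop _⟩
  refine (continuous_parametric_intervalIntegral_of_continuous hext
    continuous_id).continuousOn.congr fun s hs => integral_congr fun w hw => ?_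
  have hw' : w ∈ Icc a b := by
    rw [uIcc_of_le hs.1] at hw; exact Icc_subset_Icc_right hs.2 hw
  simp [π, projIcc_of_mem hab hs, projIcc_of_mem hab hw']

theorem integral_integral_sub_const [CompleteSpace E] {f : ℝ → ℝ → E} {τ : ℝ} (hτ : 0 ≤ τ)
    (hf : ContinuousOn (Function.uncurry f) (Icc 0 τ ×ˢ Icc 0 τ)) (c : E) :
    ∫ s in (0 : ℝ)..τ, ∫ w in (0 : ℝ)..s, (f s w - c) =
      (∫ s in (0 : ℝ)..τ, ∫ w in (0 : ℝ)..s, f s w) - (τ ^ 2 / 2) • c := by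
  have hinner : EqOn (fun s => ∫ w in (0 : ℝ)..s, (f s w - c))
      (fun s => (∫ w in (0 : ℝ)..s, f s w) - s • c) (uIcc 0 τ) := fun s hs => by
    rw [uIcc_of_le hτ] at hs
    have hslice : IntervalIntegrable (f s) MeasureTheory.volume 0 s :=
      ((hf.uncurry_left s hs).mono (Icc_subset_Icc_right hs.2)).intervalIntegrable_of_Icc hs.1
    simp [integral_sub hslice intervalIntegrable_const]
  rw [integral_congr hinner, integral_sub
    ((continuousOn_integral_of_continuousOn_Icc_prod hτ hf).intervalIntegrable_of_Icc hτ)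
    ((by fun_prop : Continuous fun s : ℝ => s • c).intervalIntegrable 0 τ),
    intervalIntegral.integral_smul_const, integral_id]
  simp

end

theorem triangle_midpoint_quadrature_general {E : Type*} [NormedAddCommGroup E] [NormedSpace ℝ E]
    [CompleteSpace E] (τ M₀ M₁ : ℝ) (hτ : 0 < τ) (g gs gw : ℝ → ℝ → E)
    (hcont : ContinuousOn (fun p : ℝ × ℝ => g p.1 p.2) (Set.Icc 0 τ ×ˢ Set.Icc 0 τ))
    (hds : ∀ s ∈ Set.Icc (0 : ℝ) τ, ∀ w ∈ Set.Icc (0 : ℝ) τ,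
      HasDerivAt (fun s' => g s' w) (gs s w) s)
    (hdw : ∀ s ∈ Set.Icc (0 : ℝ) τ, ∀ w ∈ Set.Icc (0 : ℝ) τ,
      HasDerivAt (fun w' => g s w') (gw s w) w)
    (hM₀ : ∀ s ∈ Set.Icc (0 : ℝ) τ, ∀ w ∈ Set.Icc (0 : ℝ) τ, ‖g s w‖ ≤ M₀)
    (hM₁s : ∀ s ∈ Set.Icc (0 : ℝ) τ, ∀ w ∈ Set.Icc (0 : ℝ) τ, ‖gs s w‖ ≤ M₁)
    (hM₁w : ∀ s ∈ Set.Icc (0 : ℝ) τ, ∀ w ∈ Set.Icc (0 : ℝ) τ, ‖gw s w‖ ≤ M₁) :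
    ‖(∫ s in (0 : ℝ)..τ, ∫ w in (0 : ℝ)..s, g s w) - (τ ^ 2 / 2) • g (τ / 2) (τ / 2)‖
      ≤ min (3 / 2 * τ ^ 2 * M₀) (τ ^ 3 * M₁) := by
  have hmid : τ / 2 ∈ Icc (0 : ℝ) τ := ⟨by linarith, by linarith⟩
  have hM₀_nonneg : 0 ≤ M₀ := (norm_nonneg _).trans (hM₀ _ hmid _ hmid)
  have hM₁_nonneg : 0 ≤ M₁ := (norm_nonneg _).trans (hM₁s _ hmid _ hmid)
  have hdist_mid : ∀ x ∈ Icc 0 τ, |x - τ / 2| ≤ τ / 2 := fun x hx =>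
    abs_le.2 ⟨by linarith [hx.1], by linarith [hx.2]⟩
  have hosc₀ : ∀ s ∈ Icc 0 τ, ∀ w ∈ Icc 0 τ, ‖g s w - g (τ / 2) (τ / 2)‖ ≤ 2 * M₀ :=
    fun s hs w hw => (norm_sub_le_of_le (hM₀ s hs w hw) (hM₀ _ hmid _ hmid)).trans_eq
      (two_mul M₀).symm
  have hosc₁ : ∀ s ∈ Icc 0 τ, ∀ w ∈ Icc 0 τ, ‖g s w - g (τ / 2) (τ / 2)‖ ≤ τ * M₁ :=
    fun s hs w hw => calc
      ‖g s w - g (τ / 2) (τ / 2)‖ ≤ M₁ * (|s - τ / 2| + |w - τ / 2|) :=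
        norm_sub_le_of_norm_partialDeriv_le (convex_Icc 0 τ) (convex_Icc 0 τ)
          (fun x hx y hy => (hds x hx y hy).hasDerivWithinAt)
          (fun x hx y hy => (hdw x hx y hy).hasDerivWithinAt) hM₁s hM₁w hs hmid hw hmid
      _ ≤ M₁ * (τ / 2 + τ / 2) := by gcongr; exacts [hdist_mid s hs, hdist_mid w hw]
      _ = τ * M₁ := by ring
  rw [← integral_integral_sub_const hτ.le hcont]
  refine le_min ?_ ?_
  · calc _ ≤ 2 * M₀ * (τ ^ 2 / 2) := norm_integral_integral_le_of_norm_le hτ.le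
          fun s hs w hw => hosc₀ s hs w (Icc_subset_Icc_right hs.2 hw)
      _ ≤ 3 / 2 * τ ^ 2 * M₀ := by nlinarith [sq_nonneg τ]
  · calc _ ≤ τ * M₁ * (τ ^ 2 / 2) := norm_integral_integral_le_of_norm_le hτ.le
          fun s hs w hw => hosc₁ s hs w (Icc_subset_Icc_right hs.2 hw)
      _ ≤ τ ^ 3 * M₁ := by nlinarith [pow_pos hτ 3]

/-- two-dimensional midpoint quadrature estimate over a triangle:
if g is continuously differentiable on [0,τ]² with ‖g‖ ≤ M₀ and both partial
derivatives bounded by M₁ there, then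
‖∫₀^τ ∫₀^s g(s,w) dw ds − (τ²/2)g(τ/2,τ/2)‖ ≤ min((3/2)τ²M₀, τ³M₁). -/
theorem triangle_midpoint_quadrature {E : Type*} [NormedAddCommGroup E] [NormedSpace ℝ E]
    [CompleteSpace E] (τ M₀ M₁ : ℝ) (hτ : 0 < τ) (g gs gw : ℝ → ℝ → E)
    (hcont : ContinuousOn (fun p : ℝ × ℝ => g p.1 p.2) (Set.Icc 0 τ ×ˢ Set.Icc 0 τ))
    (hconts : ContinuousOn (fun p : ℝ × ℝ => gs p.1 p.2) (Set.Icc 0 τ ×ˢ Set.Icc 0 τ))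
    (hcontw : ContinuousOn (fun p : ℝ × ℝ => gw p.1 p.2) (Set.Icc 0 τ ×ˢ Set.Icc 0 τ))
    (hds : ∀ s ∈ Set.Icc (0 : ℝ) τ, ∀ w ∈ Set.Icc (0 : ℝ) τ,
      HasDerivAt (fun s' => g s' w) (gs s w) s)
    (hdw : ∀ s ∈ Set.Icc (0 : ℝ) τ, ∀ w ∈ Set.Icc (0 : ℝ) τ,
      HasDerivAt (fun w' => g s w') (gw s w) w)
    (hM₀ : ∀ s ∈ Set.Icc (0 : ℝ) τ, ∀ w ∈ Set.Icc (0 : ℝ) τ, ‖g s w‖ ≤ M₀)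
    (hM₁s : ∀ s ∈ Set.Icc (0 : ℝ) τ, ∀ w ∈ Set.Icc (0 : ℝ) τ, ‖gs s w‖ ≤ M₁)
    (hM₁w : ∀ s ∈ Set.Icc (0 : ℝ) τ, ∀ w ∈ Set.Icc (0 : ℝ) τ, ‖gw s w‖ ≤ M₁) :
    ‖(∫ s in (0 : ℝ)..τ, ∫ w in (0 : ℝ)..s, g s w) - (τ ^ 2 / 2) • g (τ / 2) (τ / 2)‖
      ≤ min (3 / 2 * τ ^ 2 * M₀) (τ ^ 3 * M₁) :=
  triangle_midpoint_quadrature_general τ M₀ M₁ hτ g gs gw hcont hds hdw hM₀ hM₁s hM₁w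
end
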